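/- arXiv:1811.04179 — 2 statements merged into one kernel-verified Lean document; each statement's English description precedes it below -/
import Mathlib

section
/- Let ν₁ and ν₂ be probability measures on S, let d̂ be a probability mass function on S̃, and let ε ≥ 0, η ≥ 0, α ≥ 0, R_max ≥ 0, and H ≥ 0 be real numbers. Suppose R : S → ℝ is measurable with 0 ≤ R(s) ≤ R_max for all s ∈ S, R̃ : S̃ → ℝ satisfies 0 ≤ R̃(s̃) ≤ R_max + α for all s̃ ∈ S̃, and |R(s) − R̃(φ(s))| ≤ α for all s ∈ S. If D_KL(φ₊ν₁ ‖ d̂) ≤ ε and D_KL(d̂ ‖ φ₊ν₂) ≤ η, then H·∫ R dν₁ − H·∫ R dν₂ ≤ H·(R_max + α)·(√(2ε) + √(2η)) + 2·H·α. -/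
open MeasureTheory Real
open scoped BigOperators

/-- A probability mass function on a finite type, as a real-valued function. -/
def IsPmf {T : Type*} [Fintype T] (p : T → ℝ) : Prop :=
  (∀ t, 0 ≤ p t) ∧ ∑ t, p t = 1

open Classical in
/-- Kullback–Leibler divergence between pmfs on a finite type, valued in `EReal`,
with conventions `0 · log 0 = 0` and `⊤` when absolute continuity fails. -/
noncomputable def klDiv {T : Type*} [Fintype T] (p q : T → ℝ) : EReal :=
  if ∀ t, q t = 0 → p t = 0 then ((∑ t, p t * Real.log (p t / q t) : ℝ) : EReal)
  else ⊤

/-- Pushforward of a measure under `φ`, as a real-valued mass function on a finite type. -/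
noncomputable def pushforward {S : Type*} [MeasurableSpace S] {T : Type*}
    (φ : S → T) (ν : Measure S) : T → ℝ :=
  fun t => (ν (φ ⁻¹' {t})).toReal

/-- Square root on `EReal`, sending `⊤` to `⊤`. -/
noncomputable def esqrt (x : EReal) : EReal :=
  if x = ⊤ then ⊤ else ((Real.sqrt x.toReal : ℝ) : EReal)

/-!
Up to `α`, each reward integral is the expectation of `R̃` under the pushed-forward pmf, so it
suffices to compare `∑ t, (φ₊ν₁ t - φ₊ν₂ t) R̃ t`. As `0 ≤ R̃ ≤ R_max + α`, this is at most
`R_max + α` times the total variation distance of the two pmfs. The triangle inequality through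
`d̂` and the bound `TV ≤ √KL` control that distance by `√(2ε) + √(2η)`; the latter bound goes
through the squared Hellinger distance: `(√p - √q)² ≤ p log (p / q) - p + q` termwise, and
Cauchy–Schwarz on `|p - q| = |√p - √q| (√p + √q)`.
-/

open Finset

section FiniteDistributions

variable {T : Type*} [Fintype T]

noncomputable def tvDist (p q : T → ℝ) : ℝ := (∑ t, |p t - q t|) / 2

noncomputable def sqHellinger (p q : T → ℝ) : ℝ := ∑ t, (√(p t) - √(q t)) ^ 2

theorem klDiv_le_coe_iff {p q : T → ℝ} {c : ℝ} :
    klDiv p q ≤ c ↔ (∀ t, q t = 0 → p t = 0) ∧ ∑ t, p t * log (p t / q t) ≤ c := by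
  classical
  unfold klDiv
  split_ifs with hac
  · rw [EReal.coe_le_coe_iff]
    exact ⟨fun h => ⟨hac, h⟩, And.right⟩
  · simp [hac]

theorem sq_sqrt_sub_sqrt_le_mul_log_div {p q : ℝ} (hp : 0 ≤ p) (hq : 0 ≤ q)
    (hac : q = 0 → p = 0) : (√p - √q) ^ 2 ≤ p * log (p / q) - p + q := by
  rcases hp.eq_or_lt with rfl | hp
  · simp [sq_sqrt hq]
  have hq : 0 < q := hq.lt_of_ne fun h => hp.ne' (hac h.symm)
  have hlog : 2 * (1 - √q / √p) ≤ log (p / q) := by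
    have h := one_sub_inv_le_log_of_pos (div_pos (sqrt_pos.2 hp) (sqrt_pos.2 hq))
    have hpq : p / q = (√p / √q) ^ 2 := by rw [div_pow, sq_sqrt hp.le, sq_sqrt hq.le]
    rw [inv_div] at h
    rw [hpq, log_pow]
    push_cast
    linarith
  have hexpand : p * (2 * (1 - √q / √p)) = 2 * p - 2 * √p * √q := by
    have hsp := sqrt_pos.2 hp
    field_simp
    linear_combination √q * sq_sqrt hp.le
  nlinarith [mul_le_mul_of_nonneg_left hlog hp.le, sq_sqrt hp.le, sq_sqrt hq.le]

theorem sqHellinger_le_sum_mul_log_div {p q : T → ℝ} (hp : IsPmf p) (hq : IsPmf q)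
    (hac : ∀ t, q t = 0 → p t = 0) : sqHellinger p q ≤ ∑ t, p t * log (p t / q t) :=
  calc sqHellinger p q ≤ ∑ t, (p t * log (p t / q t) - p t + q t) :=
        sum_le_sum fun t _ => sq_sqrt_sub_sqrt_le_mul_log_div (hp.1 t) (hq.1 t) (hac t)
    _ = ∑ t, p t * log (p t / q t) := by
        rw [sum_add_distrib, sum_sub_distrib, hp.2, hq.2]; ring

theorem tvDist_le_sqrt_sqHellinger {p q : T → ℝ} (hp : IsPmf p) (hq : IsPmf q) :
    tvDist p q ≤ √(sqHellinger p q) := by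
  have hfactor : ∀ t, |p t - q t| = |√(p t) - √(q t)| * (√(p t) + √(q t)) := fun t => by
    rw [← abs_of_nonneg (by positivity : 0 ≤ √(p t) + √(q t)), ← abs_mul]
    congr 1
    linear_combination sq_sqrt (hq.1 t) - sq_sqrt (hp.1 t)
  have hsum : ∑ t, (√(p t) + √(q t)) ^ 2 ≤ 2 ^ 2 :=
    calc ∑ t, (√(p t) + √(q t)) ^ 2 ≤ ∑ t, 2 * (p t + q t) := sum_le_sum fun t _ => by
          nlinarith [sq_sqrt (hp.1 t), sq_sqrt (hq.1 t), sq_nonneg (√(p t) - √(q t))]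
      _ = 2 ^ 2 := by rw [← mul_sum, sum_add_distrib, hp.2, hq.2]; norm_num
  calc tvDist p q = (∑ t, |√(p t) - √(q t)| * (√(p t) + √(q t))) / 2 := by
        simp_rw [tvDist, hfactor]
    _ ≤ √(sqHellinger p q) * √(2 ^ 2) / 2 := by
        gcongr
        refine (Real.sum_mul_le_sqrt_mul_sqrt _ _ _).trans ?_
        simp_rw [sq_abs]
        exact mul_le_mul_of_nonneg_left (sqrt_le_sqrt hsum) (sqrt_nonneg _)
    _ = √(sqHellinger p q) := by rw [sqrt_sq zero_le_two]; ring

theorem tvDist_le_sqrt_of_klDiv_le {p q : T → ℝ} (hp : IsPmf p) (hq : IsPmf q) {c : ℝ}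
    (h : klDiv p q ≤ c) : tvDist p q ≤ √c := by
  obtain ⟨hac, hle⟩ := klDiv_le_coe_iff.1 h
  exact (tvDist_le_sqrt_sqHellinger hp hq).trans <| sqrt_le_sqrt <|
    (sqHellinger_le_sum_mul_log_div hp hq hac).trans hle

theorem tvDist_triangle (p q r : T → ℝ) : tvDist p r ≤ tvDist p q + tvDist q r := by
  rw [tvDist, tvDist, tvDist, ← add_div, ← sum_add_distrib]
  gcongr with t
  exact abs_sub_le _ _ _

theorem sum_mul_sub_sum_mul_le_mul_tvDist {p q g : T → ℝ} {M : ℝ}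
    (hpq : ∑ t, p t = ∑ t, q t) (hg0 : ∀ t, 0 ≤ g t) (hgM : ∀ t, g t ≤ M) :
    ∑ t, p t * g t - ∑ t, q t * g t ≤ M * tvDist p q := by
  have hpos : ∀ t, (p t - q t) * g t ≤ (p t - q t + |p t - q t|) / 2 * M := fun t => by
    rcases le_or_gt 0 (p t - q t) with h | h
    · rw [abs_of_nonneg h]; nlinarith [hgM t]
    · rw [abs_of_neg h]; nlinarith [hg0 t]
  calc ∑ t, p t * g t - ∑ t, q t * g t = ∑ t, (p t - q t) * g t := by
        rw [← sum_sub_distrib]; simp_rw [sub_mul]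
    _ ≤ ∑ t, (p t - q t + |p t - q t|) / 2 * M := sum_le_sum fun t _ => hpos t
    _ = M * tvDist p q := by
        rw [← sum_mul, ← sum_div, sum_add_distrib, sum_sub_distrib, hpq, tvDist]; ring

end FiniteDistributions

section Pushforward

variable {S T : Type*} [MeasurableSpace S] [Fintype T] [MeasurableSpace T]
  [MeasurableSingletonClass T] {φ : S → T}

theorem integral_comp_eq_sum_pushforward (hφ : Measurable φ) (ν : Measure S) [IsFiniteMeasure ν]
    (g : T → ℝ) : ∫ s, g (φ s) ∂ν = ∑ t, pushforward φ ν t * g t := by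
  rw [← integral_map hφ.aemeasurable (measurable_of_countable g).aestronglyMeasurable,
    integral_fintype .of_finite]
  refine sum_congr rfl fun t _ => ?_
  rw [smul_eq_mul, measureReal_def, Measure.map_apply hφ (measurableSet_singleton t)]
  rfl

theorem isPmf_pushforward (hφ : Measurable φ) (ν : Measure S) [IsProbabilityMeasure ν] :
    IsPmf (pushforward φ ν) :=
  ⟨fun _ => ENNReal.toReal_nonneg,
    by simpa using (integral_comp_eq_sum_pushforward hφ ν fun _ => (1 : ℝ)).symm⟩

theorem abs_integral_sub_sum_pushforward_le (hφ : Measurable φ) (ν : Measure S)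
    [IsProbabilityMeasure ν] {f : S → ℝ} (hf : Integrable f ν) {g : T → ℝ} {α : ℝ}
    (hfg : ∀ s, |f s - g (φ s)| ≤ α) :
    |∫ s, f s ∂ν - ∑ t, pushforward φ ν t * g t| ≤ α := by
  have hg : Integrable (fun s => g (φ s)) ν :=
    (Integrable.of_finite (μ := ν.map φ)).comp_measurable hφ
  rw [← integral_comp_eq_sum_pushforward hφ, ← integral_sub hf hg]
  simpa using norm_integral_le_of_norm_le_const (μ := ν)
    (ae_of_all _ fun s => (norm_eq_abs _).trans_le (hfg s))

end Pushforward

/-- The suboptimality bound from the chain of inequalities in the proof of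
Theorem 5.1, with the additive slack `2·H·α` made explicit. -/
theorem visitation_suboptimality_bound_with_slack
    {S : Type*} [MeasurableSpace S]
    {St : Type*} [Fintype St] [MeasurableSpace St] [MeasurableSingletonClass St]
    (φ : S → St) (hφ : Measurable φ)
    (ν₁ ν₂ : Measure S) [IsProbabilityMeasure ν₁] [IsProbabilityMeasure ν₂]
    (dhat : St → ℝ) (hdhat : IsPmf dhat)
    (ε η α Rmax H : ℝ)
    (hε : 0 ≤ ε) (hη : 0 ≤ η) (hα : 0 ≤ α) (hRmax : 0 ≤ Rmax) (hH : 0 ≤ H)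
    (R : S → ℝ) (hRmeas : Measurable R) (hR0 : ∀ s, 0 ≤ R s) (hRle : ∀ s, R s ≤ Rmax)
    (Rtil : St → ℝ) (hRtil0 : ∀ t, 0 ≤ Rtil t) (hRtille : ∀ t, Rtil t ≤ Rmax + α)
    (habs : ∀ s, |R s - Rtil (φ s)| ≤ α)
    (hKL1 : klDiv (pushforward φ ν₁) dhat ≤ (ε : EReal))
    (hKL2 : klDiv dhat (pushforward φ ν₂) ≤ (η : EReal)) :
    H * ∫ s, R s ∂ν₁ - H * ∫ s, R s ∂ν₂ ≤
      H * (Rmax + α) * (Real.sqrt (2 * ε) + Real.sqrt (2 * η)) + 2 * H * α := by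
  have hp₁ := isPmf_pushforward hφ ν₁
  have hp₂ := isPmf_pushforward hφ ν₂
  have hTV : tvDist (pushforward φ ν₁) (pushforward φ ν₂) ≤ √(2 * ε) + √(2 * η) := by
    refine (tvDist_triangle _ dhat _).trans (add_le_add ?_ ?_)
    · exact (tvDist_le_sqrt_of_klDiv_le hp₁ hdhat hKL1).trans (sqrt_le_sqrt (by linarith))
    · exact (tvDist_le_sqrt_of_klDiv_le hdhat hp₂ hKL2).trans (sqrt_le_sqrt (by linarith))
  have hRint (ν : Measure S) [IsProbabilityMeasure ν] : Integrable R ν :=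
    .of_bound hRmeas.aestronglyMeasurable Rmax <| ae_of_all _ fun s => by
      rw [norm_of_nonneg (hR0 s)]; exact hRle s
  have h₁ := abs_le.1 (abs_integral_sub_sum_pushforward_le hφ ν₁ (hRint ν₁) habs)
  have h₂ := abs_le.1 (abs_integral_sub_sum_pushforward_le hφ ν₂ (hRint ν₂) habs)
  have hsum := sum_mul_sub_sum_mul_le_mul_tvDist (hp₁.2.trans hp₂.2.symm) hRtil0 hRtille
  have hgap : ∫ s, R s ∂ν₁ - ∫ s, R s ∂ν₂ ≤ (Rmax + α) * (√(2 * ε) + √(2 * η)) + 2 * α := by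
    linarith [mul_le_mul_of_nonneg_left hTV (by linarith : 0 ≤ Rmax + α)]
  linarith [mul_le_mul_of_nonneg_left hgap hH]
end

section
/- Let T be a finite type, let p, q, r be probability mass functions on T, let R̃ : T → ℝ, and let ε ≥ 0, η ≥ 0, α ≥ 0, and R_max ≥ 0 be real numbers. Suppose 0 ≤ R̃(t) ≤ R_max + α for all t ∈ T, D_KL(p‖r) ≤ ε, and D_KL(r‖q) ≤ η. Then Σ_{t∈T} R̃(t)·(p(t) − q(t)) ≤ (R_max + α)·(√(2ε) + √(2η)). -/
open MeasureTheory Real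
open scoped BigOperators

lemma pointwise_aux {a b : ℝ} (ha : 0 ≤ a) (hb : 0 ≤ b) (hab : b = 0 → a = 0) :
    (Real.sqrt a - Real.sqrt b) ^ 2 ≤ a * Real.log (a / b) - a + b := by
  rcases eq_or_lt_of_le hb with hb0 | hb0
  · have ha0 : a = 0 := hab hb0.symm
    simp [ha0, ← hb0]
  rcases eq_or_lt_of_le ha with ha0 | ha0
  · simp [← ha0, Real.sq_sqrt hb]
  set u := Real.sqrt a with hu
  set v := Real.sqrt b with hv
  have hu0 : 0 < u := Real.sqrt_pos.2 ha0
  have hv0 : 0 < v := Real.sqrt_pos.2 hb0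
  have hau : a = u ^ 2 := (Real.sq_sqrt ha).symm
  have hbv : b = v ^ 2 := (Real.sq_sqrt hb).symm
  have hlogeq : Real.log (a / b) = 2 * (Real.log u - Real.log v) := by
    rw [Real.log_div (ne_of_gt ha0) (ne_of_gt hb0), hau, hbv,
      Real.log_pow, Real.log_pow]
    push_cast; ring
  have hlog : 1 - v / u ≤ Real.log u - Real.log v := by
    have := Real.one_sub_inv_le_log_of_pos (div_pos hu0 hv0)
    rwa [Real.log_div (ne_of_gt hu0) (ne_of_gt hv0), inv_div] at this
  rw [hlogeq, hau, hbv]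
  have h1 : v / u * u = v := div_mul_cancel₀ v (ne_of_gt hu0)
  nlinarith [mul_le_mul_of_nonneg_left hlog (le_of_lt (mul_pos hu0 hu0)),
    mul_pos hu0 hv0, sq_nonneg (u - v)]

lemma pinsker_aux {T : Type*} [Fintype T] {p q : T → ℝ}
    (hp : (∀ t, 0 ≤ p t) ∧ ∑ t, p t = 1) (hq : (∀ t, 0 ≤ q t) ∧ ∑ t, q t = 1)
    (hac : ∀ t, q t = 0 → p t = 0) :
    ∑ t, |p t - q t| ≤ 2 * Real.sqrt (∑ t, p t * Real.log (p t / q t)) := by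
  set S := ∑ t, p t * Real.log (p t / q t) with hS
  have hsq : ∑ t, (Real.sqrt (p t) - Real.sqrt (q t)) ^ 2 ≤ S := by
    calc ∑ t, (Real.sqrt (p t) - Real.sqrt (q t)) ^ 2
        ≤ ∑ t, (p t * Real.log (p t / q t) - p t + q t) :=
          Finset.sum_le_sum fun t _ => pointwise_aux (hp.1 t) (hq.1 t) (hac t)
      _ = S := by rw [Finset.sum_add_distrib, Finset.sum_sub_distrib, hp.2, hq.2]; ring
  have hcs := Finset.sum_mul_sq_le_sq_mul_sq Finset.univ
      (fun t => Real.sqrt (p t) + Real.sqrt (q t))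
      (fun t => |Real.sqrt (p t) - Real.sqrt (q t)|)
  have habs : ∀ t, |p t - q t|
      = (Real.sqrt (p t) + Real.sqrt (q t)) * |Real.sqrt (p t) - Real.sqrt (q t)| := by
    intro t
    rw [← abs_of_nonneg (add_nonneg (Real.sqrt_nonneg (p t)) (Real.sqrt_nonneg (q t))),
      ← abs_mul]
    congr 1
    have := Real.sq_sqrt (hp.1 t); have := Real.sq_sqrt (hq.1 t)
    nlinarith
  have hsum4 : ∑ t, (Real.sqrt (p t) + Real.sqrt (q t)) ^ 2 ≤ 4 := by
    calc ∑ t, (Real.sqrt (p t) + Real.sqrt (q t)) ^ 2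
        ≤ ∑ t, (2 * p t + 2 * q t) := by
          refine Finset.sum_le_sum fun t _ => ?_
          have h1 := Real.sq_sqrt (hp.1 t); have h2 := Real.sq_sqrt (hq.1 t)
          nlinarith [sq_nonneg (Real.sqrt (p t) - Real.sqrt (q t))]
      _ = 4 := by rw [Finset.sum_add_distrib, ← Finset.mul_sum, ← Finset.mul_sum,
            hp.2, hq.2]; norm_num
  have hA : (∑ t, |p t - q t|) ^ 2 ≤ 4 * S := by
    calc (∑ t, |p t - q t|) ^ 2
        = (∑ t, (Real.sqrt (p t) + Real.sqrt (q t)) * |Real.sqrt (p t) - Real.sqrt (q t)|) ^ 2 := by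
          simp_rw [habs]
      _ ≤ (∑ t, (Real.sqrt (p t) + Real.sqrt (q t)) ^ 2) *
            ∑ t, |Real.sqrt (p t) - Real.sqrt (q t)| ^ 2 := hcs
      _ ≤ 4 * S := by
          refine mul_le_mul hsum4 ?_ (Finset.sum_nonneg fun t _ => sq_nonneg _)
            (by norm_num)
          simpa [sq_abs] using hsq
  have h0 : 0 ≤ ∑ t, |p t - q t| := Finset.sum_nonneg fun t _ => abs_nonneg _
  calc ∑ t, |p t - q t| = Real.sqrt ((∑ t, |p t - q t|) ^ 2) := (Real.sqrt_sq h0).symm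
    _ ≤ Real.sqrt (4 * S) := Real.sqrt_le_sqrt hA
    _ = 2 * Real.sqrt S := by
        rw [show (4 : ℝ) * S = 2 ^ 2 * S by ring, Real.sqrt_mul (by positivity),
          Real.sqrt_sq (by norm_num)]



open Classical in
lemma klDiv_le_real {T : Type*} [Fintype T] {p q : T → ℝ} {c : ℝ}
    (h : klDiv p q ≤ (c : EReal)) :
    (∀ t, q t = 0 → p t = 0) ∧ ∑ t, p t * Real.log (p t / q t) ≤ c := by
  unfold klDiv at h
  split_ifs at h with hc
  · exact ⟨hc, by exact_mod_cast h⟩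
  · exact absurd h (by simp)

/-- The core quantitative bound in the proof of Theorem 5.1: the difference in expected
abstract reward between `p` and `q` is controlled by their KL divergences to the common
predicted distribution `r` and the bound `Rmax + α` on the abstract reward. -/
theorem abstract_reward_diff_le
    {T : Type*} [Fintype T] (p q r : T → ℝ) (Rtil : T → ℝ)
    (ε η α Rmax : ℝ)
    (hε : 0 ≤ ε) (hη : 0 ≤ η) (hα : 0 ≤ α) (hRmax : 0 ≤ Rmax)
    (hp : IsPmf p) (hq : IsPmf q) (hr : IsPmf r)
    (hRtil0 : ∀ t, 0 ≤ Rtil t) (hRtille : ∀ t, Rtil t ≤ Rmax + α)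
    (hKL1 : klDiv p r ≤ (ε : EReal)) (hKL2 : klDiv r q ≤ (η : EReal)) :
    ∑ t, Rtil t * (p t - q t) ≤ (Rmax + α) * (Real.sqrt (2 * ε) + Real.sqrt (2 * η)) := by
  obtain ⟨hac1, hS1⟩ := klDiv_le_real hKL1
  obtain ⟨hac2, hS2⟩ := klDiv_le_real hKL2
  have hP1 : ∑ t, |p t - r t| ≤ 2 * Real.sqrt ε :=
    (pinsker_aux hp hr hac1).trans (by
      gcongr)
  have hP2 : ∑ t, |r t - q t| ≤ 2 * Real.sqrt η :=
    (pinsker_aux hr hq hac2).trans (by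
      gcongr)
  have htri : ∑ t, |p t - q t| ≤ 2 * Real.sqrt ε + 2 * Real.sqrt η := by
    calc ∑ t, |p t - q t| ≤ ∑ t, (|p t - r t| + |r t - q t|) :=
          Finset.sum_le_sum fun t _ => by
            simpa using abs_sub_le (p t) (r t) (q t)
      _ = (∑ t, |p t - r t|) + ∑ t, |r t - q t| := Finset.sum_add_distrib
      _ ≤ _ := add_le_add hP1 hP2
  set M := Rmax + α with hM
  have hM0 : 0 ≤ M := by positivity
  have hstep : ∑ t, Rtil t * (p t - q t) ≤ M * ((1 / 2) * ∑ t, |p t - q t|) := by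
    have hmax : ∑ t, Rtil t * (p t - q t) ≤ M * ∑ t, max (p t - q t) 0 := by
      rw [Finset.mul_sum]
      refine Finset.sum_le_sum fun t _ => ?_
      rcases le_or_gt 0 (p t - q t) with h | h
      · rw [max_eq_left h]
        exact mul_le_mul_of_nonneg_right (hRtille t) h
      · rw [max_eq_right h.le]
        exact (mul_nonpos_of_nonneg_of_nonpos (hRtil0 t) h.le).trans (by simp)
    have hsum0 : ∑ t, (p t - q t) = 0 := by
      rw [Finset.sum_sub_distrib, hp.2, hq.2]; ring
    have : ∑ t, max (p t - q t) 0 = (1 / 2) * ∑ t, |p t - q t| := by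
      have : ∀ x : ℝ, max x 0 = (x + |x|) / 2 := fun x => by
        rcases le_or_gt 0 x with h | h
        · rw [max_eq_left h, abs_of_nonneg h]; ring
        · rw [max_eq_right h.le, abs_of_neg h]; ring
      simp_rw [this]
      rw [← Finset.sum_div, Finset.sum_add_distrib, hsum0]
      ring
    rw [this] at hmax; exact hmax
  calc ∑ t, Rtil t * (p t - q t)
      ≤ M * ((1 / 2) * ∑ t, |p t - q t|) := hstep
    _ ≤ M * ((1 / 2) * (2 * Real.sqrt ε + 2 * Real.sqrt η)) := by gcongr
    _ = M * (Real.sqrt ε + Real.sqrt η) := by ring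
    _ ≤ M * (Real.sqrt (2 * ε) + Real.sqrt (2 * η)) := by
        gcongr <;> linarith
end
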